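/- arXiv:2107.00213 — 2 statements merged into one kernel-verified Lean document; each statement's English description precedes it below -/
import Mathlib

section
/- For the complete k-partite graph K_{k*1} (i.e., the complete graph K_k) and for K_{k*2} (complete k-partite with all parts of size 2), with N the number of vertices, the strong equitable vertex 1-arboricity equals ⌈N/2⌉. -/
open Finset

/-- The complete multipartite graph with parts of sizes `n 0, …, n (k-1)`. -/
def CompleteMultipartite (k : ℕ) (n : Fin k → ℕ) :
    SimpleGraph (Σ i : Fin k, Fin (n i)) where
  Adj v w := v.1 ≠ w.1
  symm := ⟨fun _ _ h => h.symm⟩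
  loopless := ⟨fun _ h => h rfl⟩

/-- The sizes of any two color classes of `C` differ by at most one. -/
def EquitableSizes {V : Type} [Fintype V] {q : ℕ} (C : V → Fin q) : Prop :=
  ∀ i j : Fin q,
    (univ.filter (fun v => C v = i)).card ≤ (univ.filter (fun v => C v = j)).card + 1

/-- An equitable `(q,1)`-tree-coloring: classes of sizes pairwise differing by at
most one, each inducing a forest of maximum degree at most 1 (equivalently,
maximum degree at most 1 inside each class). -/
def IsEqTreeColoring {V : Type} [Fintype V] (G : SimpleGraph V) (q : ℕ) : Prop :=
  ∃ C : V → Fin q, EquitableSizes C ∧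
    ∀ v w x : V, C w = C v → C x = C v → G.Adj v w → G.Adj v x → w = x

/-- An equitable `q`-coloring: a proper coloring with classes of sizes pairwise
differing by at most one. -/
def IsEqColoring {V : Type} [Fintype V] (G : SimpleGraph V) (q : ℕ) : Prop :=
  ∃ C : V → Fin q, EquitableSizes C ∧ ∀ v w : V, G.Adj v w → C v ≠ C w

/-- The number `d` of Definition 1: the minimum integer `d ≥ ⌈N/q⌉` such that
either two of the `n i` are not divisible by `d`, or some `n i` satisfies
`n i / ⌊n i / d⌋ > d + 1`. -/
noncomputable def dOf (k q : ℕ) (n : Fin k → ℕ) : ℕ :=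
  sInf {d : ℕ | ((∑ i, n i) + q - 1) / q ≤ d ∧
    ((∃ i j : Fin k, i ≠ j ∧ ¬ d ∣ n i ∧ ¬ d ∣ n j) ∨
     (∃ i : Fin k, ((n i : ℚ) / ((n i / d : ℕ) : ℚ) > d + 1)))}

/-- `p(q : n₁, …, n_k) = ⌈n₁/d⌉ + ⋯ + ⌈n_k/d⌉`. -/
noncomputable def pOf (k q : ℕ) (n : Fin k → ℕ) : ℕ :=
  ∑ i, (n i + dOf k q n - 1) / dOf k q n

/- With `N = k * n` vertices and `n ≤ 2`, colouring the vertices round-robin gives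
equitable classes of size at most `2`, and a class of at most two vertices trivially has maximum
degree at most `1`; this works exactly when `N ≤ 2 q`. Conversely, if `2 q < N` some class holds
three vertices, and since no part contains three of them, one of the three is adjacent to the
other two. -/

lemma card_filter_mod_eq {V : Type} [Fintype V] {N q : ℕ} (e : V ≃ Fin N) (hq : 0 < q)
    (i : Fin q) :
    #{v | (e v : ℕ) % q = i} = N / q + if (i : ℕ) < N % q then 1 else 0 := by
  rw [← Nat.mod_eq_of_lt i.isLt, ← Nat.count_modEq_card N hq, Nat.count_eq_card_filter_range]
  refine card_bij (fun v _ => e v) (fun v hv => ?_) (fun _ _ _ _ h => e.injective (Fin.ext h))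
    (fun m hm => ?_)
  · rw [mem_filter] at hv ⊢
    exact ⟨mem_range.mpr (e v).isLt, hv.2⟩
  · rw [mem_filter, mem_range] at hm
    exact ⟨e.symm ⟨m, hm.1⟩, by simpa [Nat.ModEq] using hm.2, by simp⟩

lemma exists_equitableSizes_card_fiber_le_two (V : Type) [Fintype V] {q : ℕ}
    (hN : Fintype.card V ≤ 2 * q) :
    ∃ C : V → Fin q, EquitableSizes C ∧ ∀ i, #{v | C v = i} ≤ 2 := by
  rcases q.eq_zero_or_pos with rfl | hq
  · have : IsEmpty V := Fintype.card_eq_zero_iff.mp (by omega)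
    exact ⟨isEmptyElim, fun i => i.elim0, fun i => i.elim0⟩
  set N := Fintype.card V
  let e := Fintype.equivFin V
  have hfiber (i : Fin q) : #{v | (⟨e v % q, Nat.mod_lt _ hq⟩ : Fin q) = i}
      = N / q + if (i : ℕ) < N % q then 1 else 0 := by
    simpa only [Fin.ext_iff] using card_filter_mod_eq e hq i
  have hdiv : N / q ≤ 2 := Nat.div_le_of_le_mul (by linarith)
  have hdiv_of_mod (h : N % q ≠ 0) : N / q ≤ 1 := by
    have hlt : N < 2 * q := lt_of_le_of_ne hN fun h' => h (h' ▸ Nat.mul_mod_left 2 q)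
    have := (Nat.div_lt_iff_lt_mul hq).mpr hlt
    omega
  refine ⟨fun v => ⟨e v % q, Nat.mod_lt _ hq⟩, fun i j => ?_, fun i => ?_⟩
  · rw [hfiber i, hfiber j]
    split_ifs <;> omega
  · rw [hfiber i]
    split_ifs with h
    · have := hdiv_of_mod (by omega); omega
    · omega

lemma isEqTreeColoring_of_card_le_two_mul {V : Type} [Fintype V] (G : SimpleGraph V) {q : ℕ}
    (hN : Fintype.card V ≤ 2 * q) : IsEqTreeColoring G q := by
  obtain ⟨C, hCeq, hC2⟩ := exists_equitableSizes_card_fiber_le_two V hN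
  refine ⟨C, hCeq, fun v w x hw hx hvw hvx => by_contra fun hwx => ?_⟩
  have h3 : 2 < #{u | C u = C v} :=
    two_lt_card.mpr ⟨v, by simp, w, by simpa, x, by simpa, hvw.ne, hvx.ne, hwx⟩
  exact absurd (hC2 (C v)) (by omega)

lemma fst_ne_or_fst_ne_of_ne {k : ℕ} {n : Fin k → ℕ} (hn : ∀ i, n i ≤ 2)
    {a b c : Σ i : Fin k, Fin (n i)} (hab : a ≠ b) (hac : a ≠ c) (hbc : b ≠ c) :
    a.1 ≠ b.1 ∨ a.1 ≠ c.1 := by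
  rw [← not_and_or]
  obtain ⟨i, a⟩ := a
  obtain ⟨j, b⟩ := b
  obtain ⟨l, c⟩ := c
  rintro ⟨rfl : i = j, rfl : i = l⟩
  have h3 : 2 < #(univ : Finset (Fin (n i))) :=
    two_lt_card.mpr ⟨a, mem_univ _, b, mem_univ _, c, mem_univ _,
      fun h => hab (h ▸ rfl), fun h => hac (h ▸ rfl), fun h => hbc (h ▸ rfl)⟩
  rw [card_univ, Fintype.card_fin] at h3
  exact absurd (hn i) (by omega)

lemma CompleteMultipartite.exists_adj_adj_of_two_lt_card {k : ℕ} {n : Fin k → ℕ}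
    (hn : ∀ i, n i ≤ 2) {s : Finset (Σ i : Fin k, Fin (n i))} (hs : 2 < #s) :
    ∃ v ∈ s, ∃ w ∈ s, ∃ x ∈ s, w ≠ x ∧
      (CompleteMultipartite k n).Adj v w ∧ (CompleteMultipartite k n).Adj v x := by
  obtain ⟨a, ha, b, hb, c, hc, hab, hac, hbc⟩ := two_lt_card.mp hs
  by_cases hab₁ : a.1 = b.1
  · have hac₁ : a.1 ≠ c.1 :=
      (fst_ne_or_fst_ne_of_ne hn hab hac hbc).resolve_left (not_not.mpr hab₁)
    exact ⟨c, hc, a, ha, b, hb, hab, Ne.symm hac₁, fun h => hac₁ (hab₁.trans h.symm)⟩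
  by_cases hac₁ : a.1 = c.1
  · exact ⟨b, hb, a, ha, c, hc, hac, Ne.symm hab₁, fun h => hab₁ (hac₁.trans h.symm)⟩
  · exact ⟨a, ha, b, hb, c, hc, hbc, hab₁, hac₁⟩

lemma CompleteMultipartite.not_isEqTreeColoring_of_two_mul_lt_card {k : ℕ} {n : Fin k → ℕ}
    (hn : ∀ i, n i ≤ 2) {q : ℕ} (hq : 2 * q < ∑ i, n i) :
    ¬ IsEqTreeColoring (CompleteMultipartite k n) q := by
  rintro ⟨C, -, hC⟩
  obtain ⟨i, hi⟩ := Fintype.exists_lt_card_fiber_of_mul_lt_card (f := C) (n := 2)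
    (by simpa [Fintype.card_sigma, mul_comm] using hq)
  obtain ⟨v, hv, w, hw, x, hx, hwx, hvw, hvx⟩ := exists_adj_adj_of_two_lt_card hn hi
  simp only [mem_filter, mem_univ, true_and] at hv hw hx
  exact hwx (hC v w x (hw.trans hv.symm) (hx.trans hv.symm) hvw hvx)

lemma CompleteMultipartite.isLeast_eqTreeColoring_threshold (k n : ℕ) (hn : n ≤ 2) :
    IsLeast {p : ℕ | ∀ q, p ≤ q →
        IsEqTreeColoring (CompleteMultipartite k (fun _ => n)) q} ((k * n + 1) / 2) := by
  have hcard : Fintype.card (Σ _ : Fin k, Fin n) = k * n := by simp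
  refine ⟨fun q hq => isEqTreeColoring_of_card_le_two_mul _ (by omega), fun p hp => ?_⟩
  by_contra! hlt
  refine not_isEqTreeColoring_of_two_mul_lt_card (fun _ => hn) ?_
    (hp ((k * n + 1) / 2 - 1) (by omega))
  simp only [sum_const, card_univ, Fintype.card_fin, smul_eq_mul]
  omega

theorem stmt10_general (k : ℕ) :
    IsLeast {p : ℕ | ∀ q, p ≤ q →
        IsEqTreeColoring (CompleteMultipartite k (fun _ => 1)) q}
      ((k * 1 + 1) / 2) ∧
    IsLeast {p : ℕ | ∀ q, p ≤ q →
        IsEqTreeColoring (CompleteMultipartite k (fun _ => 2)) q}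
      ((k * 2 + 1) / 2) :=
  ⟨CompleteMultipartite.isLeast_eqTreeColoring_threshold k 1 (by norm_num),
    CompleteMultipartite.isLeast_eqTreeColoring_threshold k 2 le_rfl⟩

theorem stmt10 (k : ℕ) (hk : 2 ≤ k) :
    IsLeast {p : ℕ | ∀ q, p ≤ q →
        IsEqTreeColoring (CompleteMultipartite k (fun _ => 1)) q}
      ((k * 1 + 1) / 2) ∧
    IsLeast {p : ℕ | ∀ q, p ≤ q →
        IsEqTreeColoring (CompleteMultipartite k (fun _ => 2)) q}
      ((k * 2 + 1) / 2) :=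
  stmt10_general k
end

section
/- Let k ≥ 3 and n = 3b+1 for a positive integer b. Then for every q ≥ kb + ⌈k/2⌉, the graph K_{k*n} admits an equitable (q,1)-tree-coloring; moreover va≡₁(K_{k*n}) = kb + ⌈k/2⌉. -/
open Finset

/-!
In `K_{k*n}` a colour class containing a vertex with two neighbours in the class meets two parts
and has at least three vertices; conversely, a class with at least three vertices is admissible
only if it lies inside one part. A part of size `3b+1` therefore holds at most `b` classes of size
`≥ 3`, so at most `kb` classes have three or more vertices. With `q = kb + ⌈k/2⌉ - 1 > kb` colours
some class has at most two vertices, so by equitability all classes have at most three, and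
`N = k(3b+1) ≤ 2q + kb` fails.

For `q ≥ kb + ⌈k/2⌉`, list the first `3b` vertices of every part, part after part, and then the
last vertex of every part. Cutting this list into `N - 2q` consecutive triples, then pairs, then
singletons gives an equitable colouring; since `3 ∣ 3b` each triple stays inside one part, and the
triples are the only classes with three vertices.
-/

def ClassDegreeLeOne {V : Type} {q : ℕ} (G : SimpleGraph V) (C : V → Fin q) : Prop :=
  ∀ v w x : V, C w = C v → C x = C v → G.Adj v w → G.Adj v x → w = x

def bigClasses {V : Type} [Fintype V] {q : ℕ} (C : V → Fin q) : Finset (Fin q) :=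
  {c | 3 ≤ #{v | C v = c}}

lemma mem_bigClasses {V : Type} [Fintype V] {q : ℕ} {C : V → Fin q} {c : Fin q} :
    c ∈ bigClasses C ↔ 3 ≤ #{v | C v = c} := by
  simp [bigClasses]

def blockColor (t u m : ℕ) : ℕ :=
  if m < 3 * t then m / 3
  else if m < 3 * t + 2 * u then t + (m - 3 * t) / 2
  else t + u + (m - (3 * t + 2 * u))

def blockStart (t u c : ℕ) : ℕ :=
  3 * min c t + 2 * (min c (t + u) - t) + (c - (t + u))

lemma blockColor_eq_iff {t u m c : ℕ} :
    blockColor t u m = c ↔ blockStart t u c ≤ m ∧ m < blockStart t u (c + 1) := by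
  unfold blockColor blockStart
  split_ifs <;> omega

lemma card_filter_blockColor_eq {N t u : ℕ} (h : 3 * t + 2 * u ≤ N) (c : ℕ) :
    #{m ∈ range N | blockColor t u m = c} =
      if c < t then 3 else if c < t + u then 2 else if c < N - 2 * t - u then 1 else 0 := by
  have : {m ∈ range N | blockColor t u m = c} =
      Ico (blockStart t u c) (min (blockStart t u (c + 1)) N) := by
    ext m
    simp only [mem_filter, mem_range, mem_Ico, blockColor_eq_iff]
    omega
  rw [this, Nat.card_Ico]
  unfold blockStart
  split_ifs <;> omega

lemma card_filter_comp_eq_of_image_eq {V : Type} [Fintype V] {pos : V → ℕ} {N : ℕ}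
    (hinj : Function.Injective pos) (himage : univ.image pos = range N)
    (P : ℕ → Prop) [DecidablePred P] :
    #{v | P (pos v)} = #{m ∈ range N | P m} := by
  rw [← himage, filter_image, card_image_of_injective _ hinj]

lemma exists_equitable_of_injective {V : Type} [Fintype V] {N q : ℕ} (pos : V → ℕ)
    (hinj : Function.Injective pos) (himage : univ.image pos = range N) (hN : N ≤ 3 * q) :
    ∃ C : V → Fin q, EquitableSizes C ∧
      ∀ c ∈ bigClasses C, ∀ v, C v = c → pos v < 3 * (N - 2 * q) ∧ pos v / 3 = c := by
  -- `t` triples and `u` pairs: the class sizes are 3 and 2 if `2q ≤ N`, 2 and 1 if `q ≤ N < 2q`,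
  -- and 1 and 0 if `N < q`
  obtain ⟨t, ht⟩ : ∃ t, t = N - 2 * q := ⟨_, rfl⟩
  obtain ⟨u, hu⟩ : ∃ u, u = N - 2 * t - q := ⟨_, rfl⟩
  have hpos : ∀ v, pos v < N := fun v => by
    simpa [himage] using mem_image_of_mem pos (mem_univ v)
  have hlt : ∀ v, blockColor t u (pos v) < q := fun v => by
    have := hpos v
    unfold blockColor
    split_ifs <;> omega
  set C : V → Fin q := fun v => ⟨blockColor t u (pos v), hlt v⟩
  have hcard : ∀ c : Fin q, #{v | C v = c} =
      if c < t then 3 else if c < t + u then 2 else if c < N - 2 * t - u then 1 else 0 := by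
    intro c
    simp only [C, Fin.ext_iff]
    rw [card_filter_comp_eq_of_image_eq hinj himage (blockColor t u · = c),
      card_filter_blockColor_eq (by omega)]
  refine ⟨C, fun i j => ?_, fun c hc v hv => ?_⟩
  · rw [hcard, hcard]
    have := i.isLt
    have := j.isLt
    split_ifs <;> omega
  · have hct : c < t := by
      rw [mem_bigClasses, hcard] at hc
      split_ifs at hc <;> omega
    have := blockColor_eq_iff.1 (congrArg Fin.val hv)
    unfold blockStart at this
    omega

def vertexPos (k b : ℕ) (v : Σ _ : Fin k, Fin (3 * b + 1)) : ℕ :=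
  if v.2 < 3 * b then 3 * b * v.1 + v.2 else 3 * (k * b) + v.1

section vertexPos

variable {k b : ℕ}

lemma vertexPos_lt_iff (v : Σ _ : Fin k, Fin (3 * b + 1)) :
    vertexPos k b v < 3 * (k * b) ↔ v.2 < 3 * b := by
  unfold vertexPos
  split_ifs with h
  · have : 3 * b * (v.1 + 1) ≤ 3 * b * k := Nat.mul_le_mul_left _ v.1.isLt
    simp only [h, iff_true]
    linarith
  · simp only [h, iff_false]
    omega

lemma vertexPos_div_of_lt {v : Σ _ : Fin k, Fin (3 * b + 1)} (hv : v.2 < 3 * b) :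
    vertexPos k b v / (3 * b) = v.1 := by
  rw [vertexPos, if_pos hv, Nat.mul_add_div (by omega), Nat.div_eq_of_lt hv, add_zero]

lemma vertexPos_lt (v : Σ _ : Fin k, Fin (3 * b + 1)) : vertexPos k b v < 3 * (k * b) + k := by
  by_cases hv : v.2 < 3 * b
  · have := (vertexPos_lt_iff v).2 hv
    omega
  · simp only [vertexPos, if_neg hv]
    omega

lemma vertexPos_injective : Function.Injective (vertexPos k b) := by
  rintro ⟨i, j⟩ ⟨i', j'⟩ h
  by_cases hj : j < 3 * b
  · have hj' : j' < 3 * b := (vertexPos_lt_iff _).1 (h ▸ (vertexPos_lt_iff ⟨i, j⟩).2 hj)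
    obtain rfl : i = i' := by
      have := vertexPos_div_of_lt (v := ⟨i, j⟩) hj
      rw [h, vertexPos_div_of_lt (v := ⟨i', j'⟩) hj'] at this
      exact Fin.ext this.symm
    obtain rfl : j = j' := by
      simp only [vertexPos, if_pos hj, if_pos hj'] at h
      omega
    rfl
  · have hj' : ¬ j' < 3 * b := fun hj' =>
      hj ((vertexPos_lt_iff _).1 (h ▸ (vertexPos_lt_iff ⟨i', j'⟩).2 hj'))
    simp only [vertexPos, if_neg hj, if_neg hj'] at h
    obtain rfl : i = i' := by omega
    obtain rfl : j = j' := by omega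
    rfl

lemma image_vertexPos : univ.image (vertexPos k b) = range (3 * (k * b) + k) := by
  refine eq_of_subset_of_card_le (fun m hm => ?_) ?_
  · obtain ⟨v, -, rfl⟩ := mem_image.1 hm
    exact mem_range.2 (vertexPos_lt v)
  · rw [card_range, card_image_of_injective _ vertexPos_injective, card_univ,
      Fintype.card_sigma]
    simp only [Fintype.card_fin, sum_const, card_univ, smul_eq_mul]
    exact le_of_eq (by ring)

lemma fst_eq_of_vertexPos_div_three_eq {v w : Σ _ : Fin k, Fin (3 * b + 1)}
    (hv : vertexPos k b v < 3 * (k * b)) (hw : vertexPos k b w < 3 * (k * b))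
    (h : vertexPos k b v / 3 = vertexPos k b w / 3) : v.1 = w.1 := by
  rw [vertexPos_lt_iff] at hv hw
  apply Fin.ext
  rw [← vertexPos_div_of_lt hv, ← vertexPos_div_of_lt hw, ← Nat.div_div_eq_div_mul,
    ← Nat.div_div_eq_div_mul, h]

end vertexPos

section CompleteMultipartite

variable {k q : ℕ} {n : Fin k → ℕ}

lemma classDegreeLeOne_completeMultipartite_iff (C : (Σ i : Fin k, Fin (n i)) → Fin q) :
    ClassDegreeLeOne (CompleteMultipartite k n) C ↔
      ∀ c ∈ bigClasses C, ∀ v w, C v = c → C w = c → v.1 = w.1 := by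
  constructor
  · intro hC c hc v w hv hw
    by_contra hvw
    obtain ⟨z, hz, hzvw⟩ : ∃ z ∈ ({v' | C v' = c} : Finset _), z ∉ ({v, w} : Finset _) :=
      exists_mem_notMem_of_card_lt_card (card_le_two.trans_lt (mem_bigClasses.1 hc))
    simp only [mem_filter, mem_univ, true_and] at hz
    simp only [mem_insert, mem_singleton, not_or] at hzvw
    by_cases hzv : z.1 = v.1
    · exact hzvw.1 (hC w v z (hv.trans hw.symm) (hz.trans hw.symm) (Ne.symm hvw)
        (fun h => hvw (h.trans hzv).symm)).symm
    · exact hzvw.2 (hC v w z (hw.trans hv.symm) (hz.trans hv.symm) hvw (Ne.symm hzv)).symm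
  · intro h v w x hw hx hvw hvx
    by_contra hwx
    have hbig : C v ∈ bigClasses C :=
      mem_bigClasses.2 <| two_lt_card_iff.2 ⟨v, w, x, ?_, ?_, ?_, ?_, ?_, ?_⟩
    · exact hvw (h (C v) hbig v w rfl hw)
    · simp
    · simpa using hw
    · simpa using hx
    · rintro rfl; exact hvw rfl
    · rintro rfl; exact hvx rfl
    · exact hwx

lemma card_filter_fst_eq (i : Fin k) : #{v : Σ i : Fin k, Fin (n i) | v.1 = i} = n i := by
  have : ({v : Σ i : Fin k, Fin (n i) | v.1 = i} : Finset _) =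
      univ.map (Function.Embedding.sigmaMk i) := by
    ext ⟨j, x⟩
    simp only [mem_filter, mem_univ, true_and, mem_map, Function.Embedding.sigmaMk_apply]
    constructor
    · rintro rfl
      exact ⟨x, rfl⟩
    · rintro ⟨y, h⟩
      exact (Sigma.mk.inj_iff.1 h).1.symm
  rw [this, card_map, card_univ, Fintype.card_fin]

lemma card_bigClasses_le {C : (Σ i : Fin k, Fin (n i)) → Fin q}
    (hC : ClassDegreeLeOne (CompleteMultipartite k n) C) :
    #(bigClasses C) ≤ ∑ i, n i / 3 := by
  rw [classDegreeLeOne_completeMultipartite_iff] at hC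
  set part : Fin k → Finset (Fin q) := fun i => {c ∈ bigClasses C | ∃ v, C v = c ∧ v.1 = i}
  have hpart : ∀ i, 3 * #(part i) ≤ n i := fun i => calc
    3 * #(part i) ≤ ∑ c ∈ part i, #{v | C v = c} := by
      rw [mul_comm, ← smul_eq_mul]
      exact card_nsmul_le_sum _ _ _ fun c hc => mem_bigClasses.1 (mem_filter.1 hc).1
    _ = #{v | C v ∈ part i} := sum_card_fiberwise_eq_card_filter _ _ _
    _ ≤ #{v : Σ i : Fin k, Fin (n i) | v.1 = i} := by
      refine card_le_card fun v hv => ?_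
      simp only [part, mem_filter, mem_univ, true_and] at hv ⊢
      obtain ⟨hbig, w, hw, rfl⟩ := hv
      exact hC _ hbig v w rfl hw
    _ = n i := card_filter_fst_eq i
  calc #(bigClasses C) ≤ #(univ.biUnion part) := by
        refine card_le_card fun c hc => ?_
        obtain ⟨v, hv⟩ := card_pos.1 (lt_of_lt_of_le (by norm_num) (mem_bigClasses.1 hc))
        exact mem_biUnion.2 ⟨v.1, mem_univ _, mem_filter.2 ⟨hc, v, (mem_filter.1 hv).2, rfl⟩⟩
    _ ≤ ∑ i, #(part i) := card_biUnion_le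
    _ ≤ ∑ i, n i / 3 := sum_le_sum fun i _ => (Nat.le_div_iff_mul_le (by norm_num)).2 (by
        rw [mul_comm]; exact hpart i)

lemma sum_le_of_isEqTreeColoring (h : IsEqTreeColoring (CompleteMultipartite k n) q)
    (hq : ∑ i, n i / 3 < q) : ∑ i, n i ≤ 2 * q + ∑ i, n i / 3 := by
  obtain ⟨C, hEq, hC⟩ := h
  set T := bigClasses C
  have hT : #T ≤ ∑ i, n i / 3 := card_bigClasses_le hC
  obtain ⟨c₀, -, hc₀⟩ : ∃ c₀ ∈ univ, c₀ ∉ T :=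
    exists_mem_notMem_of_card_lt_card (by simpa using hT.trans_lt hq)
  have hsize : ∀ c, #{v | C v = c} ≤ 2 + if c ∈ T then 1 else 0 := fun c => by
    have := hEq c c₀
    simp only [T, mem_bigClasses] at hc₀ ⊢
    split_ifs <;> omega
  calc ∑ i, n i = Fintype.card (Σ i : Fin k, Fin (n i)) := by simp [Fintype.card_sigma]
    _ = ∑ c, #{v | C v = c} := card_eq_sum_card_fiberwise fun _ _ => mem_univ _
    _ ≤ ∑ c : Fin q, (2 + if c ∈ T then 1 else 0) := sum_le_sum fun c _ => hsize c
    _ = 2 * q + #T := by simp [sum_add_distrib, mul_comm]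
    _ ≤ 2 * q + ∑ i, n i / 3 := by omega

end CompleteMultipartite

lemma isEqTreeColoring_of_le {k b q : ℕ} (hq : k * b + (k + 1) / 2 ≤ q) :
    IsEqTreeColoring (CompleteMultipartite k fun _ => 3 * b + 1) q := by
  obtain ⟨C, hEq, hbig⟩ := exists_equitable_of_injective (N := 3 * (k * b) + k) (q := q)
    (vertexPos k b) vertexPos_injective image_vertexPos (by omega)
  refine ⟨C, hEq, (classDegreeLeOne_completeMultipartite_iff C).2 fun c hc v w hv hw => ?_⟩
  obtain ⟨hv_lt, hv_div⟩ := hbig c hc v hv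
  obtain ⟨hw_lt, hw_div⟩ := hbig c hc w hw
  exact fst_eq_of_vertexPos_div_three_eq (by omega) (by omega) (hv_div.trans hw_div.symm)

lemma not_isEqTreeColoring {k b : ℕ} (hk : 3 ≤ k) :
    ¬ IsEqTreeColoring (CompleteMultipartite k fun _ => 3 * b + 1) (k * b + (k + 1) / 2 - 1) := by
  intro h
  have hsum := sum_le_of_isEqTreeColoring h
  simp only [sum_const, card_univ, Fintype.card_fin, smul_eq_mul,
    show (3 * b + 1) / 3 = b by omega, mul_add_one, mul_left_comm k 3 b] at hsum
  omega

theorem stmt13_general (k b : ℕ) (hk : 3 ≤ k) :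
    (∀ q, k * b + (k + 1) / 2 ≤ q →
        IsEqTreeColoring (CompleteMultipartite k (fun _ => 3 * b + 1)) q) ∧
    IsLeast {p : ℕ | ∀ q, p ≤ q →
        IsEqTreeColoring (CompleteMultipartite k (fun _ => 3 * b + 1)) q}
      (k * b + (k + 1) / 2) := by
  refine ⟨fun q => isEqTreeColoring_of_le, fun q => isEqTreeColoring_of_le, fun p hp => ?_⟩
  by_contra! hlt
  exact not_isEqTreeColoring hk (hp _ (by omega))

theorem stmt13 (k b : ℕ) (hk : 3 ≤ k) (hb : 1 ≤ b) :
    (∀ q, k * b + (k + 1) / 2 ≤ q →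
        IsEqTreeColoring (CompleteMultipartite k (fun _ => 3 * b + 1)) q) ∧
    IsLeast {p : ℕ | ∀ q, p ≤ q →
        IsEqTreeColoring (CompleteMultipartite k (fun _ => 3 * b + 1)) q}
      (k * b + (k + 1) / 2) :=
  stmt13_general k b hk
end
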